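/- Let G : L₂^p → L₂^q be a bounded linear operator and n := max(p,q). For α ∈ ℝ define G_α : L₂^p → L₂^n by G_α u := ι_{n←q}(Gu) − α·ι_{n←p}(u), and set υ_α := ‖G_α‖ (the operator norm) and ℓ_α := inf_{u∈L₂^p, ‖u‖=1} ‖G_α u‖. Then for any sets Υ, Λ ⊆ ℝ the MIMO SRG of G satisfies: SRG(G) ⊆ ∩_{α∈Υ} { z ∈ ℂ : |z − α| ≤ υ_α }, and for every α ∈ Λ, SRG(G) ∩ { z ∈ ℂ : |z − α| < ℓ_α } = ∅. -/

import Mathlib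

open MeasureTheory ComplexConjugate
open scoped RealInnerProductSpace

/-- `L₂^d = L²([0,∞), ℝ^d)`. -/
noncomputable abbrev L2S (d : ℕ) :=
  MeasureTheory.Lp (EuclideanSpace ℝ (Fin d)) 2 (MeasureTheory.volume.restrict (Set.Ici (0 : ℝ)))

/-- Resize map `ℝ^a → ℝ^b`: zero-padding if `a ≤ b`, projection if `b ≤ a`. -/
noncomputable def resizeCLM (a b : ℕ) :
    EuclideanSpace ℝ (Fin a) →L[ℝ] EuclideanSpace ℝ (Fin b) :=
  LinearMap.toContinuousLinearMap
    { toFun := fun x => WithLp.toLp 2 (fun i => if h : (i : ℕ) < a then x ⟨(i : ℕ), h⟩ else 0)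
      map_add' := by
        intro x y
        ext i
        by_cases h : (i : ℕ) < a <;> simp [PiLp.add_apply, h]
      map_smul' := by
        intro c x
        ext i
        by_cases h : (i : ℕ) < a <;> simp [PiLp.smul_apply, h] }

/-- The induced map on `L₂` spaces; for `a ≤ b` this is the zero-padding embedding `ι_{b←a}`,
for `b ≤ a` the projection `π_{b←a}`. -/
noncomputable def LpResize (a b : ℕ) : L2S a →L[ℝ] L2S b :=
  (resizeCLM a b).compLpL 2 (MeasureTheory.volume.restrict (Set.Ici (0 : ℝ)))

/-- The pairing `Σ_{i < min(p,q)} ∫₀^∞ Δu_i(t)·Δy_i(t) dt`, realized as the inner product of the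
zero-padded signals in `L₂^{max(p,q)}`. -/
noncomputable def mimoPairing {p q : ℕ} (du : L2S p) (dy : L2S q) : ℝ :=
  ⟪LpResize p (max p q) du, LpResize q (max p q) dy⟫

/-- The point `(‖Δy‖/‖Δu‖)·e^{iθ}` with `cos θ` given by the normalized MIMO pairing,
`θ ∈ [0,π]` (equal to `0` when `Δy = 0`). -/
noncomputable def mimoPoint {p q : ℕ} (du : L2S p) (dy : L2S q) : ℂ :=
  ((‖dy‖ / ‖du‖ : ℝ) : ℂ) *
    Complex.exp (Complex.I * ((Real.arccos (mimoPairing du dy / (‖du‖ * ‖dy‖)) : ℝ) : ℂ))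

/-- The MIMO Scaled Relative Graph of an operator `R : L₂^p → L₂^q` (the SRG of the zero-padded
operator on `L₂^{max(p,q)}` over the zero-padded input subspace); both signs of the angle are
included. -/
noncomputable def mimoSRG {p q : ℕ} (R : L2S p → L2S q) : Set ℂ :=
  { z | ∃ u₁ u₂ : L2S p, u₁ ≠ u₂ ∧
      (z = mimoPoint (u₁ - u₂) (R u₁ - R u₂) ∨
        z = conj (mimoPoint (u₁ - u₂) (R u₁ - R u₂))) }

/-- The operator `G_α : L₂^p → L₂^{max(p,q)}`, `G_α u = ι_{n←q}(Gu) − α·ι_{n←p}(u)` with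
`n = max(p,q)`, as a continuous linear map. -/
noncomputable def Galpha {p q : ℕ} (G : L2S p →L[ℝ] L2S q) (α : ℝ) :
    L2S p →L[ℝ] L2S (max p q) :=
  (LpResize q (max p q)).comp G - α • LpResize p (max p q)

/-! For `Δu ≠ 0` the SRG point `z = r e^{±iθ}`, with `r = ‖Δy‖/‖Δu‖` and
`cos θ = ⟨ιΔu, ιΔy⟩/(‖Δu‖‖Δy‖)`, satisfies `|z - α|‖Δu‖ = ‖ιΔy - α ιΔu‖` by the law of cosines,
since the zero-paddings `ι` are isometric. For linear `G` the right-hand side is `‖G_α Δu‖`, and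
both claims follow from `ℓ_α‖Δu‖ ≤ ‖G_α Δu‖ ≤ υ_α‖Δu‖`. -/

lemma norm_resizeCLM_of_le {a b : ℕ} (h : a ≤ b) (x : EuclideanSpace ℝ (Fin a)) :
    ‖resizeCLM a b x‖ = ‖x‖ := by
  rw [EuclideanSpace.norm_eq, EuclideanSpace.norm_eq]
  congr 1
  refine (Fintype.sum_of_injective (Fin.castLE h) (Fin.castLE_injective h) _ _ ?_ ?_).symm
  · rintro i hi
    have hia : ¬ (i : ℕ) < a := fun hia => hi ⟨⟨i, hia⟩, rfl⟩
    simp [resizeCLM, hia]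
  · intro i
    simp [resizeCLM]

lemma norm_LpResize_of_le {a b : ℕ} (h : a ≤ b) (f : L2S a) : ‖LpResize a b f‖ = ‖f‖ := by
  rw [Lp.norm_def, Lp.norm_def]
  congr 1
  refine eLpNorm_congr_norm_ae ?_
  filter_upwards [(resizeCLM a b).coeFn_compLp f] with t ht
  change ‖(resizeCLM a b).compLp f t‖ = ‖f t‖
  rw [ht, norm_resizeCLM_of_le h]

lemma norm_ofReal_mul_exp_arccos_sub_sq (r c α : ℝ) (hc : |c| ≤ 1) :
    ‖(r : ℂ) * Complex.exp (Complex.I * (Real.arccos c : ℂ)) - α‖ ^ 2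
      = r ^ 2 - 2 * α * (r * c) + α ^ 2 := by
  obtain ⟨hc₁, hc₂⟩ := abs_le.mp hc
  have hpolar : (r : ℂ) * Complex.exp (Complex.I * (Real.arccos c : ℂ)) - α
      = ((r * c - α : ℝ) : ℂ) + ((r * Real.sin (Real.arccos c) : ℝ) : ℂ) * Complex.I := by
    rw [mul_comm Complex.I, Complex.exp_mul_I, ← Complex.ofReal_cos, ← Complex.ofReal_sin,
      Real.cos_arccos hc₁ hc₂]
    push_cast
    ring
  have hsin : Real.sin (Real.arccos c) ^ 2 = 1 - c ^ 2 := by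
    rw [Real.sin_arccos, Real.sq_sqrt (by nlinarith)]
  rw [hpolar, Complex.sq_norm, Complex.normSq_add_mul_I]
  linear_combination r ^ 2 * hsin

lemma norm_mimoPoint_sub_mul_norm {p q : ℕ} (du : L2S p) (dy : L2S q) (α : ℝ) (hdu : du ≠ 0) :
    ‖mimoPoint du dy - α‖ * ‖du‖
      = ‖LpResize q (max p q) dy - α • LpResize p (max p q) du‖ := by
  have hdu_norm : ‖LpResize p (max p q) du‖ = ‖du‖ := norm_LpResize_of_le (le_max_left p q) du
  have hdy_norm : ‖LpResize q (max p q) dy‖ = ‖dy‖ := norm_LpResize_of_le (le_max_right p q) dy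
  set P := mimoPairing du dy with hP
  have hCS : |P| ≤ ‖du‖ * ‖dy‖ := by
    rw [← hdu_norm, ← hdy_norm]
    exact abs_real_inner_le_norm _ _
  have hcos : |P / (‖du‖ * ‖dy‖)| ≤ 1 := by
    rw [abs_div, abs_mul, abs_norm, abs_norm]
    exact div_le_one_of_le₀ hCS (by positivity)
  -- `r cos θ ‖Δu‖² = P`, also when `Δy = 0`, where both sides vanish
  have hproj : ‖dy‖ / ‖du‖ * (P / (‖du‖ * ‖dy‖)) * ‖du‖ ^ 2 = P := by
    rcases eq_or_ne ‖dy‖ 0 with hdy | hdy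
    · rw [hdy, mul_zero] at hCS
      rw [hdy, abs_nonpos_iff.mp hCS]
      simp
    · field_simp
  have hlaw : ‖LpResize q (max p q) dy - α • LpResize p (max p q) du‖ ^ 2
      = ‖dy‖ ^ 2 - 2 * α * P + α ^ 2 * ‖du‖ ^ 2 := by
    rw [norm_sub_sq_real, real_inner_smul_right, real_inner_comm, norm_smul, hdy_norm, hdu_norm,
      Real.norm_eq_abs, mul_pow, sq_abs, hP, mimoPairing]
    ring
  refine (pow_left_inj₀ (by positivity) (norm_nonneg _) two_ne_zero).mp ?_
  rw [mul_pow, mimoPoint, norm_ofReal_mul_exp_arccos_sub_sq _ _ _ hcos, hlaw, ← hproj]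
  field_simp

lemma exists_norm_sub_mul_eq_of_mem_mimoSRG {p q : ℕ} {R : L2S p → L2S q} {z : ℂ}
    (hz : z ∈ mimoSRG R) (α : ℝ) :
    ∃ u₁ u₂ : L2S p, u₁ ≠ u₂ ∧ ‖z - α‖ * ‖u₁ - u₂‖
      = ‖LpResize q (max p q) (R u₁ - R u₂) - α • LpResize p (max p q) (u₁ - u₂)‖ := by
  obtain ⟨u₁, u₂, hne, hz⟩ := hz
  refine ⟨u₁, u₂, hne, ?_⟩
  have hconj : ‖z - α‖ = ‖mimoPoint (u₁ - u₂) (R u₁ - R u₂) - α‖ := by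
    rcases hz with rfl | rfl
    · rfl
    · rw [← Complex.norm_conj, map_sub, Complex.conj_conj, Complex.conj_ofReal]
  rw [hconj, norm_mimoPoint_sub_mul_norm _ _ _ (sub_ne_zero.mpr hne)]

lemma Galpha_apply {p q : ℕ} (G : L2S p →L[ℝ] L2S q) (α : ℝ) (u : L2S p) :
    Galpha G α u = LpResize q (max p q) (G u) - α • LpResize p (max p q) u := rfl

lemma exists_norm_sub_mul_eq_norm_Galpha_of_mem_mimoSRG {p q : ℕ} {G : L2S p →L[ℝ] L2S q}
    {z : ℂ} (hz : z ∈ mimoSRG (G : L2S p → L2S q)) (α : ℝ) :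
    ∃ du : L2S p, du ≠ 0 ∧ ‖z - α‖ * ‖du‖ = ‖Galpha G α du‖ := by
  obtain ⟨u₁, u₂, hne, h⟩ := exists_norm_sub_mul_eq_of_mem_mimoSRG hz α
  exact ⟨u₁ - u₂, sub_ne_zero.mpr hne, by rw [h, Galpha_apply, map_sub G]⟩

lemma ContinuousLinearMap.iInf_norm_apply_unit_mul_le {E F : Type*} [NormedAddCommGroup E]
    [NormedSpace ℝ E] [NormedAddCommGroup F] [NormedSpace ℝ F] (T : E →L[ℝ] F) (x : E) :
    (⨅ u : { u : E // ‖u‖ = 1 }, ‖T u‖) * ‖x‖ ≤ ‖T x‖ := by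
  rcases eq_or_ne x 0 with rfl | hx
  · simp
  have hx_pos : 0 < ‖x‖ := norm_pos_iff.mpr hx
  have hunit : ‖‖x‖⁻¹ • x‖ = 1 := by
    rw [norm_smul, norm_inv, norm_norm, inv_mul_cancel₀ hx_pos.ne']
  have hbdd : BddBelow (Set.range fun u : { u : E // ‖u‖ = 1 } => ‖T u‖) :=
    ⟨0, by rintro _ ⟨u, rfl⟩; exact norm_nonneg _⟩
  have hinf := ciInf_le hbdd ⟨‖x‖⁻¹ • x, hunit⟩
  rw [map_smul, norm_smul, norm_inv, norm_norm] at hinf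
  rwa [← le_div_iff₀ hx_pos, div_eq_inv_mul]

/-- SRG bounds for bounded linear MIMO operators: with `υ_α = ‖G_α‖` (operator
norm) and `ℓ_α = inf_{‖u‖=1} ‖G_α u‖`, for any `Υ, Λ ⊆ ℝ` the MIMO SRG of `G` is contained in
each closed disk `D_{υ_α}(α)`, `α ∈ Υ`, and avoids each open disk of radius `ℓ_α` centered at
`α ∈ Λ`. -/
theorem stmt17 (p q : ℕ) (G : L2S p →L[ℝ] L2S q) (Υ Λ : Set ℝ) :
    (mimoSRG (G : L2S p → L2S q) ⊆
      ⋂ α ∈ Υ, { z : ℂ | ‖z - (α : ℂ)‖ ≤ ‖Galpha G α‖ }) ∧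
    (∀ α ∈ Λ,
      mimoSRG (G : L2S p → L2S q) ∩
        { z : ℂ | ‖z - (α : ℂ)‖ <
            ⨅ u : { u : L2S p // ‖u‖ = 1 }, ‖Galpha G α u.val‖ } = ∅) := by
  refine ⟨fun z hz => Set.mem_iInter₂.mpr fun α _ => ?_, fun α _ => ?_⟩
  · obtain ⟨du, hdu, h⟩ := exists_norm_sub_mul_eq_norm_Galpha_of_mem_mimoSRG hz α
    refine le_of_mul_le_mul_right ?_ (norm_pos_iff.mpr hdu)
    exact h ▸ (Galpha G α).le_opNorm du
  · refine Set.eq_empty_iff_forall_notMem.mpr fun z ⟨hz, hlt⟩ => ?_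
    obtain ⟨du, hdu, h⟩ := exists_norm_sub_mul_eq_norm_Galpha_of_mem_mimoSRG hz α
    have hle : (⨅ u : { u : L2S p // ‖u‖ = 1 }, ‖Galpha G α u.val‖) * ‖du‖ ≤ ‖z - α‖ * ‖du‖ :=
      h ▸ (Galpha G α).iInf_norm_apply_unit_mul_le du
    exact hlt.not_ge (le_of_mul_le_mul_right hle (norm_pos_iff.mpr hdu))
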